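/- Let T be a triangulated category with a bounded t-structure, G an object of T, and d a positive integer. Suppose P is a collection of objects of T such that for each object E of T and each integer a, there is a morphism P → E with P ∈ P inducing isomorphisms on H^n for all n ≥ a. Then T = ⟨G⟩_d if and only if every object of P belongs to ⟨G⟩_d. -/

import Mathlib

/-!
Common preamble: generation in triangulated categories, truncation triangles for
t-structures, "isomorphism in degrees ≥ a", levels `⟨G⟩_n`, `coprod_n`,
and Rouquier dimension.
-/

open CategoryTheory Limits Pretriangulated Triangulated

namespace RouquierApprox

variable {C : Type*} [Category C] [Preadditive C] [HasZeroObject C] [HasShift C ℤ]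
  [∀ (n : ℤ), (shiftFunctor C n).Additive] [Pretriangulated C]

/-- A t-structure is non-degenerate if `⋂ₙ T^{≥n} = 0 = ⋂ₙ T^{≤-n}`. -/
def IsNonDegenerate (t : TStructure C) : Prop :=
  (∀ X : C, (∀ n : ℤ, t.ge n X) → IsZero X) ∧ (∀ X : C, (∀ n : ℤ, t.le n X) → IsZero X)

/-- A t-structure is bounded if every object is bounded. -/
def IsBoundedTStructure (t : TStructure C) : Prop :=
  ∀ X : C, ∃ n : ℤ, 0 < n ∧ t.le n X ∧ t.ge (-n) X

/-- A choice of truncation triangle `τ_{≤ a-1} A ⟶ A ⟶ τ_{≥ a} A ⟶ (τ_{≤ a-1} A)[1]`. -/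
structure TruncGETriangle (t : TStructure C) (a : ℤ) (A : C) where
  left : C
  right : C
  left_le : t.le (a - 1) left
  right_ge : t.ge a right
  ι : left ⟶ A
  π : A ⟶ right
  δ : right ⟶ left⟦(1 : ℤ)⟧
  dist : Triangle.mk ι π δ ∈ distTriang C

/-- `f : A ⟶ B` induces isomorphisms on the cohomology objects `H^n` (with respect to
the t-structure `t`) for all `n ≥ a`; for a non-degenerate t-structure this is
equivalently expressed by saying that any morphism induced by `f` between the
truncations `τ_{≥ a} A ⟶ τ_{≥ a} B` is an isomorphism. -/
def IsIsoInDegreesGE (t : TStructure C) (a : ℤ) {A B : C} (f : A ⟶ B) : Prop :=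
  ∀ (TA : TruncGETriangle t a A) (TB : TruncGETriangle t a B) (g : TA.right ⟶ TB.right),
    TA.π ≫ g = f ≫ TB.π → IsIso g

/-- `P` is a retract (direct summand) of `F`. -/
def IsRetract (P F : C) : Prop := ∃ (i : P ⟶ F) (r : F ⟶ P), i ≫ r = 𝟙 P

/-- Finite coproducts of shifts of objects of `S`. -/
def finCoprodShifts (S : Set C) : Set C :=
  {X | ∃ (k : ℕ) (obj : Fin k → C) (s : Fin k → ℤ),
    (∀ i, obj i ∈ S) ∧ Nonempty (X ≅ ⨁ (fun i => (obj i)⟦s i⟧))}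

/-- `add S`: retracts of finite coproducts of shifts of objects of `S`, i.e. the
closure of `S` under shifts, finite coproducts and retracts. -/
def addSet (S : Set C) : Set C := {X | ∃ F ∈ finCoprodShifts S, IsRetract X F}

/-- Cones of morphisms from an object of `S` to an object of `T`. -/
def coneSet (S T : Set C) : Set C :=
  {Z | ∃ (A B : C) (f : A ⟶ B) (g : B ⟶ Z) (h : Z ⟶ A⟦(1 : ℤ)⟧),
    A ∈ S ∧ B ∈ T ∧ Triangle.mk f g h ∈ distTriang C}

/-- The level filtration `⟨G⟩_n`: `⟨G⟩_0` consists of zero objects, `⟨G⟩_1 = add G`,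
and `⟨G⟩_n = add (cones of maps from ⟨G⟩_{n-1} to ⟨G⟩_1)`. -/
def levelSet (G : C) : ℕ → Set C
  | 0 => {X | IsZero X}
  | 1 => addSet {G}
  | (n+2) => addSet (coneSet (levelSet G (n+1)) (addSet {G}))

/-- `coprod_n (G(-∞,∞))`: as `levelSet` but without retracts. -/
def coprodLevel (G : C) : ℕ → Set C
  | 0 => {X | IsZero X}
  | 1 => finCoprodShifts {G}
  | (n+2) => coneSet (coprodLevel G (n+1)) (finCoprodShifts {G})

/-- The level of `E` with respect to `G`: the minimal `n` with `E ∈ ⟨G⟩_n`. -/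
noncomputable def levelOf (G E : C) : ℕ∞ :=
  sInf {n : ℕ∞ | ∃ k : ℕ, n = k ∧ E ∈ levelSet G k}

/-- The Rouquier dimension of a (strictly full triangulated) subcategory `S` of `C`,
with levels computed in the ambient category: the least `d` such that
`S ⊆ ⟨G⟩_{d+1}` for some `G ∈ S`. -/
noncomputable def relRouquierDim (S : Set C) : ℕ∞ :=
  sInf {d : ℕ∞ | ∃ (k : ℕ) (G : C), G ∈ S ∧ d = k ∧ S ⊆ levelSet G (k + 1)}

/-- `G` is a strong generator of the (strictly full triangulated) subcategory `S`. -/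
def IsStrongGeneratorOf (S : Set C) (G : C) : Prop :=
  G ∈ S ∧ ∃ n : ℕ, S ⊆ levelSet G n

/-- A morphism `ψ : K ⟶ L` is `G`-ghost if every composition `G⟦n⟧ ⟶ K ⟶ L` vanishes. -/
def IsGhost (G : C) {K L : C} (ψ : K ⟶ L) : Prop :=
  ∀ (n : ℤ) (φ : G⟦n⟧ ⟶ K), φ ≫ ψ = 0

end RouquierApprox

/-!
Fix `G` in degrees `[-N, N]`. An object of `⟨G⟩_d` is a retract of an object `Q` built from
shifts of `G` by sums and cones alone, and such a `Q` has, for every `m`, a map `Q ⟶ Q'` with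
`Q' ∈ ⟨G⟩_d` in degrees `≥ m - c` that `τ_{≥ m}` inverts, where `c` depends only on `d` and
`N`: for `G` take the identity or the zero map, and the property passes to shifts, sums and,
by the five lemma applied to `Hom(-, Z)` with `Z` in degrees `≥ m`, to cones.

Now let `E` lie in degrees `≥ m` and let `p ⟶ E`, `p ∈ P`, be an isomorphism in degrees
`≥ m - c`, so that `E ≅ τ_{≥ m - c} p`. As `Q'` lies in degrees `≥ m - c`, the composite
`u : p ⟶ Q ⟶ Q'` factors through `τ_{≥ m - c} p`; as `E` lies in degrees `≥ m`, the projection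
`p ⟶ E` factors through `u`. Together these exhibit `E` as a retract of `Q' ∈ ⟨G⟩_d`.
-/

open CategoryTheory Limits Pretriangulated Triangulated ZeroObject

namespace RouquierApprox

section Retracts

variable {C : Type*} [Category C]

lemma IsRetract.of_iso {X Y : C} (e : X ≅ Y) : IsRetract X Y := ⟨e.hom, e.inv, e.hom_inv_id⟩

lemma IsRetract.trans {X Y Z : C} (h : IsRetract X Y) (h' : IsRetract Y Z) : IsRetract X Z := by
  obtain ⟨i, r, hir⟩ := h
  obtain ⟨i', r', hir'⟩ := h'
  exact ⟨i ≫ i', r' ≫ r, by simp [reassoc_of% hir', hir]⟩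

lemma IsRetract.map {D : Type*} [Category D] (F : C ⥤ D) {X Y : C} (h : IsRetract X Y) :
    IsRetract (F.obj X) (F.obj Y) := by
  obtain ⟨i, r, hir⟩ := h
  exact ⟨F.map i, F.map r, by rw [← F.map_comp, hir, F.map_id]⟩

lemma IsRetract.biproduct [HasZeroMorphisms C] [HasFiniteBiproducts C] {J : Type*} [Finite J]
    {f g : J → C} (h : ∀ j, IsRetract (f j) (g j)) : IsRetract (⨁ f) (⨁ g) := by
  choose i r hir using h
  exact ⟨biproduct.map i, biproduct.map r, by ext; simp [hir]⟩

variable [Preadditive C] [HasZeroObject C] [HasShift C ℤ] [∀ (n : ℤ), (shiftFunctor C n).Additive]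
  [Pretriangulated C]

/-- The comparison maps between the two cones compose to an endomorphism of the cone of `f`
extending identities, which is invertible by the five lemma. -/
lemma exists_isRetract_cone {A B Z A' B' : C} {f : A ⟶ B} {g : B ⟶ Z} {h : Z ⟶ A⟦(1 : ℤ)⟧}
    (hT : Triangle.mk f g h ∈ distTriang C) (hA : IsRetract A A') (hB : IsRetract B B') :
    ∃ (f' : A' ⟶ B') (Z' : C) (g' : B' ⟶ Z') (h' : Z' ⟶ A'⟦(1 : ℤ)⟧),
      Triangle.mk f' g' h' ∈ distTriang C ∧ IsRetract Z Z' := by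
  obtain ⟨iA, rA, hA⟩ := hA
  obtain ⟨iB, rB, hB⟩ := hB
  obtain ⟨Z', g', h', hT'⟩ := distinguished_cocone_triangle (rA ≫ f ≫ iB)
  have hsq : f ≫ iB = iA ≫ (rA ≫ f ≫ iB) := by rw [reassoc_of% hA]
  have hsq' : (rA ≫ f ≫ iB) ≫ rB = rA ≫ f := by simp [hB]
  obtain ⟨c, hc₂, hc₃⟩ : ∃ c : Z ⟶ Z', g ≫ c = iB ≫ g' ∧ h ≫ iA⟦(1 : ℤ)⟧' = c ≫ h' :=
    complete_distinguished_triangle_morphism _ _ hT hT' iA iB hsq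
  obtain ⟨c', hc₂', hc₃'⟩ : ∃ c' : Z' ⟶ Z, g' ≫ c' = rB ≫ g ∧ h' ≫ rA⟦(1 : ℤ)⟧' = c' ≫ h :=
    complete_distinguished_triangle_morphism _ _ hT' hT rA rB hsq'
  let T' := Triangle.mk (rA ≫ f ≫ iB) g' h'
  let φ := Triangle.homMk (Triangle.mk f g h) T' iA iB c hsq hc₂ hc₃
  let ψ := Triangle.homMk T' (Triangle.mk f g h) rA rB c' hsq' hc₂' hc₃'
  have : IsIso (c ≫ c') := isIso₃_of_isIso₁₂ (φ ≫ ψ) hT hT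
    (show IsIso (iA ≫ rA) by rw [hA]; infer_instance)
    (show IsIso (iB ≫ rB) by rw [hB]; infer_instance)
  exact ⟨_, Z', g', h', hT', c, c' ≫ inv (c ≫ c'), by rw [← Category.assoc, IsIso.hom_inv_id]⟩

end Retracts

section Generation

variable {C : Type*} [Category C] [Preadditive C] [HasZeroObject C] [HasShift C ℤ]
  [∀ (n : ℤ), (shiftFunctor C n).Additive] [Pretriangulated C] {S : Set C}

lemma isZero_biproduct {J : Type*} [Finite J] {f : J → C} (h : ∀ j, IsZero (f j)) :
    IsZero (⨁ f) := by
  rw [IsZero.iff_id_eq_zero]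
  exact biproduct.hom_ext' _ _ fun j => (h j).eq_of_src _ _

lemma mem_finCoprodShifts_of_iso_biproduct {ι : Type*} [Fintype ι] (obj : ι → C) (s : ι → ℤ)
    (hobj : ∀ i, obj i ∈ S) {X : C} (e : X ≅ ⨁ fun i => (obj i)⟦s i⟧) :
    X ∈ finCoprodShifts S := by
  let σ := Fintype.equivFin ι
  exact ⟨_, obj ∘ σ.symm, s ∘ σ.symm, fun _ => hobj _,
    ⟨e ≪≫ biproduct.whiskerEquiv σ fun i => eqToIso (by simp)⟩⟩

lemma mem_finCoprodShifts_of_isZero {X : C} (hX : IsZero X) : X ∈ finCoprodShifts S :=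
  ⟨0, Fin.elim0, Fin.elim0, fun i => i.elim0, ⟨hX.iso (isZero_biproduct fun j => j.elim0)⟩⟩

lemma mem_finCoprodShifts {X : C} (hX : X ∈ S) : X ∈ finCoprodShifts S :=
  mem_finCoprodShifts_of_iso_biproduct (fun _ : Unit => X) (fun _ => 0) (fun _ => hX)
    (((shiftFunctorZero C ℤ).app X).symm ≪≫ (biproductUniqueIso fun _ : Unit => X⟦(0 : ℤ)⟧).symm)

lemma shift_mem_finCoprodShifts {X : C} (hX : X ∈ finCoprodShifts S) (n : ℤ) :
    X⟦n⟧ ∈ finCoprodShifts S := by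
  obtain ⟨k, obj, s, hobj, ⟨e⟩⟩ := hX
  exact ⟨k, obj, fun i => s i + n, hobj, ⟨(shiftFunctor C n).mapIso e ≪≫
    (shiftFunctor C n).mapBiproduct _ ≪≫
    biproduct.mapIso fun i => ((shiftFunctorAdd' C (s i) n _ rfl).app (obj i)).symm⟩⟩

lemma biproduct_mem_finCoprodShifts {J : Type*} [Fintype J] {f : J → C}
    (h : ∀ j, f j ∈ finCoprodShifts S) : (⨁ f) ∈ finCoprodShifts S := by
  choose k obj s hobj e using h
  exact mem_finCoprodShifts_of_iso_biproduct (fun p : Σ j, Fin (k j) => obj p.1 p.2)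
    (fun p => s p.1 p.2) (fun p => hobj p.1 p.2)
    (biproduct.mapIso (fun j => (e j).some) ≪≫ biproductBiproductIso _ _)

lemma mem_addSet_of_isRetract {X Y : C} (h : IsRetract X Y) (hY : Y ∈ addSet S) :
    X ∈ addSet S := by
  obtain ⟨F, hF, hYF⟩ := hY
  exact ⟨F, hF, h.trans hYF⟩

lemma mem_addSet_of_mem_finCoprodShifts {X : C} (hX : X ∈ finCoprodShifts S) :
    X ∈ addSet S :=
  ⟨X, hX, IsRetract.of_iso (Iso.refl X)⟩

lemma mem_addSet {X : C} (hX : X ∈ S) : X ∈ addSet S :=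
  mem_addSet_of_mem_finCoprodShifts (mem_finCoprodShifts hX)

lemma mem_addSet_of_isZero {X : C} (hX : IsZero X) : X ∈ addSet S :=
  mem_addSet_of_mem_finCoprodShifts (mem_finCoprodShifts_of_isZero hX)

lemma shift_mem_addSet {X : C} (hX : X ∈ addSet S) (n : ℤ) : X⟦n⟧ ∈ addSet S := by
  obtain ⟨F, hF, hXF⟩ := hX
  exact ⟨F⟦n⟧, shift_mem_finCoprodShifts hF n, hXF.map _⟩

lemma biproduct_mem_addSet {J : Type*} [Fintype J] {f : J → C} (h : ∀ j, f j ∈ addSet S) :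
    (⨁ f) ∈ addSet S := by
  choose F hF hfF using h
  exact ⟨⨁ F, biproduct_mem_finCoprodShifts hF, IsRetract.biproduct hfF⟩

lemma mem_levelSet_succ_of_isRetract {G X Y : C} {n : ℕ} (h : IsRetract X Y)
    (hY : Y ∈ levelSet G (n + 1)) : X ∈ levelSet G (n + 1) := by
  cases n <;> exact mem_addSet_of_isRetract h hY

end Generation

section FiveLemma

variable {C : Type*} [Category C] [Preadditive C] [HasZeroObject C] [HasShift C ℤ]
  [∀ (n : ℤ), (shiftFunctor C n).Additive] [Pretriangulated C]
  {T T' : Triangle C} (hT : T ∈ distTriang C) (hT' : T' ∈ distTriang C) (φ : T ⟶ T') {Z : C}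

include hT hT' in
lemma injective_precomp_hom₃
    (h₂ : Function.Injective fun α : T'.obj₂ ⟶ Z => φ.hom₂ ≫ α)
    (h₁' : Function.Injective fun α : T'.obj₁⟦(1 : ℤ)⟧ ⟶ Z => φ.hom₁⟦1⟧' ≫ α)
    (h₂' : Function.Surjective fun α : T'.obj₂⟦(1 : ℤ)⟧ ⟶ Z => φ.hom₂⟦1⟧' ≫ α) :
    Function.Injective fun α : T'.obj₃ ⟶ Z => φ.hom₃ ≫ α := by
  refine (injective_iff_map_eq_zero (Preadditive.leftComp Z φ.hom₃)).2 fun x hx => ?_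
  replace hx : φ.hom₃ ≫ x = 0 := hx
  obtain ⟨y, rfl⟩ := Triangle.yoneda_exact₃ _ hT' x
    (h₂ (show φ.hom₂ ≫ T'.mor₂ ≫ x = φ.hom₂ ≫ 0 by
      rw [← φ.comm₂_assoc, hx, comp_zero, comp_zero]))
  obtain ⟨z, hz⟩ : ∃ z, φ.hom₁⟦1⟧' ≫ y = (-T.mor₁⟦1⟧') ≫ z :=
    Triangle.yoneda_exact₃ _ (rot_of_distTriang _ hT) (φ.hom₁⟦1⟧' ≫ y)
    (show T.mor₃ ≫ φ.hom₁⟦1⟧' ≫ y = 0 by rw [φ.comm₃_assoc, hx])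
  obtain ⟨w, rfl⟩ := h₂' z
  have hy : y = -(T'.mor₁⟦1⟧' ≫ w) := h₁' <| by
    change φ.hom₁⟦1⟧' ≫ y = φ.hom₁⟦1⟧' ≫ (-(T'.mor₁⟦1⟧' ≫ w))
    rw [hz]
    simp only [Preadditive.neg_comp, Preadditive.comp_neg, ← Functor.map_comp_assoc, φ.comm₁]
  simp [hy, comp_distTriang_mor_zero₃₁_assoc _ hT']

include hT hT' in
lemma surjective_precomp_hom₃
    (h₁ : Function.Injective fun α : T'.obj₁ ⟶ Z => φ.hom₁ ≫ α)
    (h₂ : Function.Surjective fun α : T'.obj₂ ⟶ Z => φ.hom₂ ≫ α)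
    (h₁' : Function.Surjective fun α : T'.obj₁⟦(1 : ℤ)⟧ ⟶ Z => φ.hom₁⟦1⟧' ≫ α) :
    Function.Surjective fun α : T'.obj₃ ⟶ Z => φ.hom₃ ≫ α := by
  intro x
  obtain ⟨y, hy⟩ := h₂ (T.mor₂ ≫ x)
  replace hy : φ.hom₂ ≫ y = T.mor₂ ≫ x := hy
  obtain ⟨y', rfl⟩ := Triangle.yoneda_exact₂ _ hT' y
    (h₁ (show φ.hom₁ ≫ T'.mor₁ ≫ y = φ.hom₁ ≫ 0 by
      rw [← φ.comm₁_assoc, hy, comp_distTriang_mor_zero₁₂_assoc _ hT, zero_comp, comp_zero]))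
  obtain ⟨w, hw⟩ := Triangle.yoneda_exact₃ _ hT (x - φ.hom₃ ≫ y')
    (by rw [Preadditive.comp_sub, φ.comm₂_assoc, hy, sub_self])
  obtain ⟨w', rfl⟩ := h₁' w
  refine ⟨y' + T'.mor₃ ≫ w', ?_⟩
  dsimp only
  rw [Preadditive.comp_add, ← φ.comm₃_assoc, ← hw, add_sub_cancel]

end FiveLemma

section TruncGE

variable {C : Type*} [Category C] [Preadditive C] [HasZeroObject C] [HasShift C ℤ]
  [∀ (n : ℤ), (shiftFunctor C n).Additive] [Pretriangulated C] (t : TStructure C)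

lemma isGE_biproduct {J : Type*} [Finite J] (f : J → C) (n : ℤ) (h : ∀ j, t.IsGE (f j) n) :
    t.IsGE (⨁ f) n := by
  rw [t.isGE_iff_orthogonal (n - 1) n (by lia)]
  intro Y φ _
  exact biproduct.hom_ext _ _ fun j => by
    simp [t.zero_of_isLE_of_isGE (φ ≫ biproduct.π f j) (n - 1) n (by lia) ‹_› (h j)]

/-- Equivalently, `τ_{≥ m} v` is an isomorphism: `τ_{≥ m}` is left adjoint to the inclusion of
the objects in degrees `≥ m`. -/
def IsTruncGEIso (m : ℤ) {X Y : C} (v : X ⟶ Y) : Prop :=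
  ∀ Z : C, t.IsGE Z m → Function.Bijective fun α : Y ⟶ Z => v ≫ α

variable {t}

lemma IsTruncGEIso.of_le {m m' : ℤ} {X Y : C} {v : X ⟶ Y} (hv : IsTruncGEIso t m v)
    (h : m ≤ m') : IsTruncGEIso t m' v :=
  fun Z _ => hv Z (t.isGE_of_ge Z m m' h)

lemma isTruncGEIso_of_isIso (m : ℤ) {X Y : C} (v : X ⟶ Y) [IsIso v] : IsTruncGEIso t m v :=
  fun _ _ => ⟨fun _ _ h => (cancel_epi v).1 h, fun β => ⟨inv v ≫ β, by simp⟩⟩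

lemma isTruncGEIso_zero_of_isLE (m : ℤ) {X Y : C} [t.IsLE X (m - 1)] (hY : IsZero Y) :
    IsTruncGEIso t m (0 : X ⟶ Y) :=
  fun _ _ => ⟨fun _ _ _ => hY.eq_of_src _ _, fun β => ⟨0, by simp [t.zero β (m - 1) m]⟩⟩

lemma IsTruncGEIso.shift {m : ℤ} {X Y : C} {v : X ⟶ Y} (hv : IsTruncGEIso t m v) (k m' : ℤ)
    (h : m' + k = m := by lia) : IsTruncGEIso t m' (v⟦k⟧') := by
  intro Z _
  have := t.isGE_shift Z m' (-k) m
  let adj := (shiftEquiv C k).toAdjunction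
  have key : (fun α : Y⟦k⟧ ⟶ Z => v⟦k⟧' ≫ α) =
      (adj.homEquiv X Z).symm ∘ (fun β : Y ⟶ Z⟦-k⟧ => v ≫ β) ∘ adj.homEquiv Y Z := by
    funext α
    exact (adj.homEquiv X Z).eq_symm_apply.mpr (adj.homEquiv_naturality_left v α)
  rw [key]
  exact ((adj.homEquiv X Z).symm.bijective.comp (hv _ this)).comp (adj.homEquiv Y Z).bijective

lemma IsTruncGEIso.biproductMap {m : ℤ} {J : Type*} [Finite J] {f g : J → C}
    {v : ∀ j, f j ⟶ g j} (hv : ∀ j, IsTruncGEIso t m (v j)) :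
    IsTruncGEIso t m (biproduct.map v) := by
  intro Z hZ
  refine ⟨fun a b hab => biproduct.hom_ext' _ _ fun j => (hv j Z hZ).1 ?_, fun β => ?_⟩
  · simpa only [biproduct.ι_map_assoc] using biproduct.ι f j ≫= hab
  · choose γ hγ using fun j => (hv j Z hZ).2 (biproduct.ι f j ≫ β)
    exact ⟨biproduct.desc γ, biproduct.hom_ext' _ _ fun j => by simpa using hγ j⟩

lemma IsTruncGEIso.hom₃ {m : ℤ} {T T' : Triangle C} (hT : T ∈ distTriang C)
    (hT' : T' ∈ distTriang C) (φ : T ⟶ T') (h₁ : IsTruncGEIso t m φ.hom₁)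
    (h₂ : IsTruncGEIso t m φ.hom₂) : IsTruncGEIso t m φ.hom₃ := by
  intro Z hZ
  have h₁' := (h₁.shift 1 (m - 1)).of_le (by lia) Z hZ
  have h₂' := (h₂.shift 1 (m - 1)).of_le (by lia) Z hZ
  exact ⟨injective_precomp_hom₃ hT hT' φ (h₂ Z hZ).1 h₁'.1 h₂'.2,
    surjective_precomp_hom₃ hT hT' φ (h₁ Z hZ).1 (h₂ Z hZ).2 h₁'.2⟩

end TruncGE

section Approximation

variable {C : Type*} [Category C] [Preadditive C] [HasZeroObject C] [HasShift C ℤ]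
  [∀ (n : ℤ), (shiftFunctor C n).Additive] [Pretriangulated C] (t : TStructure C)

/-- For each `m`, the object `X'` stands in for `τ_{≥ m} X` inside `L`, at the cost of extra
cohomology in degrees `[m - c, m)`. -/
def HasTruncGEApprox (L : Set C) (c : ℕ) (X : C) : Prop :=
  ∀ m : ℤ, ∃ (X' : C) (v : X ⟶ X'), X' ∈ L ∧ t.IsGE X' (m - c) ∧ IsTruncGEIso t m v

variable {t}

lemma HasTruncGEApprox.mono {L L' : Set C} {c : ℕ} {X : C} (h : HasTruncGEApprox t L c X)
    (hL : L ⊆ L') : HasTruncGEApprox t L' c X := fun m => by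
  obtain ⟨X', v, hX'L, hX'ge, hv⟩ := h m
  exact ⟨X', v, hL hX'L, hX'ge, hv⟩

variable {S : Set C} {c : ℕ}

lemma HasTruncGEApprox.shift {X : C} (h : HasTruncGEApprox t (addSet S) c X) (k : ℤ) :
    HasTruncGEApprox t (addSet S) c (X⟦k⟧) := fun m => by
  obtain ⟨X', v, hX'L, hX'ge, hv⟩ := h (m + k)
  exact ⟨X'⟦k⟧, v⟦k⟧', shift_mem_addSet hX'L k, t.isGE_shift X' (m + k - c) k (m - c),
    hv.shift k m⟩

lemma HasTruncGEApprox.biproduct {J : Type*} [Fintype J] {f : J → C}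
    (h : ∀ j, HasTruncGEApprox t (addSet S) c (f j)) :
    HasTruncGEApprox t (addSet S) c (⨁ f) := fun m => by
  choose X' v hX'L hX'ge hv using fun j => h j m
  exact ⟨⨁ X', biproduct.map v, biproduct_mem_addSet hX'L, isGE_biproduct t X' _ hX'ge,
    IsTruncGEIso.biproductMap hv⟩

lemma exists_isRetract_hasTruncGEApprox_of_mem_addSet {S' : Set C}
    (h : ∀ Y ∈ S, ∃ Y', IsRetract Y Y' ∧ HasTruncGEApprox t (addSet S') c Y') {X : C}
    (hX : X ∈ addSet S) : ∃ X', IsRetract X X' ∧ HasTruncGEApprox t (addSet S') c X' := by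
  obtain ⟨F, ⟨k, obj, s, hobj, ⟨e⟩⟩, hXF⟩ := hX
  choose Y' hY' hY'approx using fun i => h _ (hobj i)
  exact ⟨⨁ fun i => (Y' i)⟦s i⟧,
    hXF.trans ((IsRetract.of_iso e).trans (IsRetract.biproduct fun i => (hY' i).map _)),
    HasTruncGEApprox.biproduct fun i => (hY'approx i).shift (s i)⟩

/-- Below degree `a + 1` the identity works, above it the zero map does. -/
lemma hasTruncGEApprox_of_isLE_of_isGE {X : C} (hX : X ∈ S) (a b : ℤ) [t.IsLE X a]
    [t.IsGE X b] : HasTruncGEApprox t (addSet S) (a - b).toNat X := fun m => by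
  by_cases hm : a < m
  · have : t.IsLE X (m - 1) := t.isLE_of_le X a (m - 1)
    exact ⟨0, 0, mem_addSet_of_isZero (isZero_zero C), t.isGE_of_isZero (isZero_zero C) _,
      isTruncGEIso_zero_of_isLE m (isZero_zero C)⟩
  · exact ⟨X, 𝟙 X, mem_addSet hX, t.isGE_of_ge X _ b (by lia), isTruncGEIso_of_isIso m _⟩

/-- The approximation of `A` is taken `c_B` degrees lower, so that `f ≫ v_B` lifts along `v_A`. -/
lemma HasTruncGEApprox.cone {LA LB : Set C} {cA cB : ℕ} {A B Z : C} {f : A ⟶ B} {g : B ⟶ Z}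
    {h : Z ⟶ A⟦(1 : ℤ)⟧} (hT : Triangle.mk f g h ∈ distTriang C)
    (hA : HasTruncGEApprox t LA cA A) (hB : HasTruncGEApprox t LB cB B) :
    HasTruncGEApprox t (coneSet LA LB) (cA + cB + 1) Z := fun m => by
  obtain ⟨B', vB, hB'L, hB'ge, hvB⟩ := hB m
  obtain ⟨A', vA, hA'L, hA'ge, hvA⟩ := hA (m - cB)
  obtain ⟨f', hf'⟩ := (hvA B' hB'ge).2 (f ≫ vB)
  obtain ⟨Z', g', h', hT'⟩ := distinguished_cocone_triangle f'
  obtain ⟨v, hv₂, hv₃⟩ := complete_distinguished_triangle_morphism _ _ hT hT' vA vB hf'.symm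
  let φ := Triangle.homMk (Triangle.mk f g h) (Triangle.mk f' g' h') vA vB v hf'.symm hv₂ hv₃
  have : t.IsGE B' (m - (cA + cB + 1 : ℕ)) := t.isGE_of_ge B' _ (m - cB) (by lia)
  have : t.IsGE (A'⟦(1 : ℤ)⟧) (m - (cA + cB + 1 : ℕ)) :=
    t.isGE_shift A' (m - cB - cA) 1 _ (by lia)
  exact ⟨Z', v, ⟨A', B', f', g', h', hA'L, hB'L, hT'⟩,
    t.isGE₂ _ (rot_of_distTriang _ hT') _ ‹_› ‹_›,
    IsTruncGEIso.hom₃ hT hT' φ (hvA.of_le (by lia)) hvB⟩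

variable (t) in
theorem exists_isRetract_hasTruncGEApprox_of_mem_levelSet (G : C) (a b : ℤ) [t.IsLE G a]
    [t.IsGE G b] (n : ℕ) : ∃ c : ℕ, ∀ X ∈ levelSet G (n + 1),
      ∃ X', IsRetract X X' ∧ HasTruncGEApprox t (levelSet G (n + 1)) c X' := by
  have base : ∀ X ∈ addSet {G},
      ∃ X', IsRetract X X' ∧ HasTruncGEApprox t (addSet {G}) (a - b).toNat X' := by
    refine fun X hX => exists_isRetract_hasTruncGEApprox_of_mem_addSet ?_ hX
    intro Y hY
    rw [Set.mem_singleton_iff.1 hY]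
    exact ⟨G, IsRetract.of_iso (Iso.refl G),
      hasTruncGEApprox_of_isLE_of_isGE (Set.mem_singleton G) a b⟩
  induction n with
  | zero => exact ⟨_, base⟩
  | succ n ih =>
    obtain ⟨c, hc⟩ := ih
    refine ⟨c + (a - b).toNat + 1,
      fun X hX => exists_isRetract_hasTruncGEApprox_of_mem_addSet ?_ hX⟩
    rintro Z ⟨A, B, f, g, h, hA, hB, hT⟩
    obtain ⟨A', hAA', hA'⟩ := hc A hA
    obtain ⟨B', hBB', hB'⟩ := base B hB
    obtain ⟨f', Z', g', h', hT', hZZ'⟩ := exists_isRetract_cone hT hAA' hBB'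
    exact ⟨Z', hZZ', (hA'.cone hT' hB').mono fun _ => mem_addSet⟩

end Approximation

section Truncation

variable {C : Type*} [Category C] [Preadditive C] [HasZeroObject C] [HasShift C ℤ]
  [∀ (n : ℤ), (shiftFunctor C n).Additive] [Pretriangulated C] {t : TStructure C} {a : ℤ}

lemma TruncGETriangle.exists_iso_of_isIsoInDegreesGE {p E : C} (T : TruncGETriangle t a p)
    {φ : p ⟶ E} (hφ : IsIsoInDegreesGE t a φ) (hE : t.ge a E) :
    ∃ e : T.right ≅ E, T.π ≫ e.hom = φ := by
  obtain ⟨ψ, rfl⟩ := Triangle.yoneda_exact₂ _ T.dist φ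
    (t.zero_of_isLE_of_isGE _ (a - 1) a (by lia) ⟨T.left_le⟩ ⟨hE⟩)
  have := hφ T ⟨0, E, (t.isLE_of_isZero (isZero_zero C) _).le, hE, 0, 𝟙 E, 0,
    contractible_distinguished₁ E⟩ ψ (Category.comp_id _).symm
  exact ⟨asIso ψ, rfl⟩

/-- Since `Q` is in degrees `≥ a`, `u` factors as `T.π ≫ β`; then `β ≫ r - 𝟙` factors through
`T.left⟦1⟧`, which maps trivially to `T.right`. -/
lemma TruncGETriangle.isRetract_right {p Q : C} (T : TruncGETriangle t a p) (hQ : t.ge a Q)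
    {u : p ⟶ Q} {r : Q ⟶ T.right} (hr : u ≫ r = T.π) : IsRetract T.right Q := by
  have : t.IsLE T.left (a - 1) := ⟨T.left_le⟩
  obtain ⟨β, hβ⟩ : ∃ β : T.right ⟶ Q, u = T.π ≫ β := Triangle.yoneda_exact₂ _ T.dist u
    (t.zero_of_isLE_of_isGE _ (a - 1) a (by lia) ‹_› ⟨hQ⟩)
  obtain ⟨y, hy⟩ : ∃ y : T.left⟦(1 : ℤ)⟧ ⟶ T.right, β ≫ r - 𝟙 _ = T.δ ≫ y :=
    Triangle.yoneda_exact₃ _ T.dist _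
      (show T.π ≫ (β ≫ r - 𝟙 _) = 0 by rw [Preadditive.comp_sub, reassoc_of% hβ.symm, hr]; simp)
  have : t.IsLE (T.left⟦(1 : ℤ)⟧) (a - 2) := t.isLE_shift T.left (a - 1) 1 (a - 2)
  have hy0 : y = 0 := t.zero_of_isLE_of_isGE y (a - 2) a (by lia) ‹_› ⟨T.right_ge⟩
  exact ⟨β, r, sub_eq_zero.1 (by rw [hy, hy0, comp_zero])⟩

end Truncation

end RouquierApprox

open CategoryTheory Limits Pretriangulated Triangulated RouquierApprox

/-- Proposition 3.6. Let `T` be a triangulated category with a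
bounded t-structure, `G` an object and `d > 0`. Suppose `P` is a collection of
objects which approximates objects of `T`: for each object `E` and integer `a`
there is a map `p ⟶ E` with `p ∈ P` which is an isomorphism in degrees `≥ a`.
Then `T = ⟨G⟩_d` if and only if `P ⊆ ⟨G⟩_d`. -/
theorem statement5 {C : Type*} [Category C] [Preadditive C] [HasZeroObject C] [HasShift C ℤ]
    [∀ (n : ℤ), (shiftFunctor C n).Additive] [Pretriangulated C]
    (t : TStructure C) (hb : IsBoundedTStructure t)
    (G : C) (d : ℕ) (hd : 0 < d) (P : Set C)
    (happrox : ∀ (E : C) (a : ℤ), ∃ p ∈ P, ∃ φ : p ⟶ E, IsIsoInDegreesGE t a φ) :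
    levelSet G d = Set.univ ↔ P ⊆ levelSet G d := by
  refine ⟨fun h => h ▸ Set.subset_univ P, fun hP => Set.eq_univ_of_forall fun E => ?_⟩
  obtain ⟨n, rfl⟩ := Nat.exists_eq_add_one_of_ne_zero hd.ne'
  obtain ⟨M, -, hGle, hGge⟩ := hb G
  have : t.IsLE G M := ⟨hGle⟩
  have : t.IsGE G (-M) := ⟨hGge⟩
  obtain ⟨c, hc⟩ := exists_isRetract_hasTruncGEApprox_of_mem_levelSet t G M (-M) n
  obtain ⟨N, -, -, hE⟩ := hb E
  obtain ⟨p, hp, φ, hφ⟩ := happrox E (-N - c)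
  obtain ⟨Q, ⟨i, r, hir⟩, hQ⟩ := hc p (hP hp)
  obtain ⟨Q', v, hQ'L, hQ'ge, hv⟩ := hQ (-N)
  obtain ⟨W, R, hW, hR, ι, π, δ, hT⟩ := t.exists_triangle p (-N - c - 1) (-N - c) (by lia)
  let T : TruncGETriangle t (-N - c) p := ⟨W, R, hW, hR, ι, π, δ, hT⟩
  obtain ⟨e, -⟩ := T.exists_iso_of_isIsoInDegreesGE hφ (t.ge_antitone (by lia) _ hE)
  have : t.IsGE E (-N) := ⟨hE⟩
  obtain ⟨α, hα⟩ : ∃ α, v ≫ α = r ≫ π := (hv R (t.isGE_of_iso e.symm (-N))).2 (r ≫ π)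
  have hRQ' : IsRetract R Q' := T.isRetract_right hQ'ge.ge (u := i ≫ v) (r := α)
    (by rw [Category.assoc, hα, reassoc_of% hir])
  exact mem_levelSet_succ_of_isRetract ((IsRetract.of_iso e.symm).trans hRQ') hQ'L
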